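/- Let q† be a probability array on [n]^d, h a real array, a ∈ ℝ, B = supp(q†) ∩ supp(h), and Λ(λ) = (Σ_{i∈B} h_i q†_i e^{λh_i})/(Σ_i q†_i e^{λh_i}). Assume h is not constant on B and a ∈ range(Λ). Then the I-projection q* of q† on E'' = {p probability array : Σ_i p_i h_i = a} exists, is unique, and is given by the exponential tilting q*_i = q†_i e^{Λ^{-1}(a) h_i} / (Σ_{i'} q†_{i'} e^{Λ^{-1}(a) h_{i'}}). -/

import Mathlib

open Real BigOperators ENNReal

def IsProbArray {ι : Type*} [Fintype ι] (p : ι → ℝ) : Prop :=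
  (∀ i, 0 ≤ p i) ∧ ∑ i : ι, p i = 1

noncomputable def klArr {ι : Type*} [Fintype ι] (p q : ι → ℝ) : ℝ≥0∞ :=
  open scoped Classical in
  if ∀ i, q i = 0 → p i = 0
  then ENNReal.ofReal (∑ i : ι, p i * Real.log (p i / q i)) else ⊤

/-!
The tilted array `q* ∝ q† e^{λ₀ h}` satisfies the Pythagorean identity
`I(p‖q†) = I(p‖q*) + I(q*‖q†)` for every probability array `p ≪ q†` with the same mean
`∑ p h = a`, because `log (q*/q†) = λ₀ h - log Z` is affine in `h`. Gibbs' inequality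
`I(p‖q*) ≥ 0`, with equality only for `p = q*`, then gives both minimality and uniqueness.
-/

open InformationTheory

section Gibbs

lemma mul_log_div_sub_sub_eq_mul_klFun {p q : ℝ} (hq : 0 < q) :
    p * log (p / q) - (p - q) = q * klFun (p / q) := by
  rw [klFun_apply]
  field_simp
  ring

lemma sub_le_mul_log_div {p q : ℝ} (hp : 0 ≤ p) (hq : 0 ≤ q) (hpq : q = 0 → p = 0) :
    p - q ≤ p * log (p / q) := by
  rcases hq.eq_or_lt with rfl | hq
  · simp [hpq rfl]
  · have := mul_nonneg hq.le (klFun_nonneg (div_nonneg hp hq.le))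
    linarith [mul_log_div_sub_sub_eq_mul_klFun (p := p) hq]

lemma eq_of_mul_log_div_eq_sub {p q : ℝ} (hp : 0 ≤ p) (hq : 0 ≤ q) (hpq : q = 0 → p = 0)
    (heq : p * log (p / q) = p - q) : p = q := by
  rcases hq.eq_or_lt with rfl | hq
  · exact hpq rfl
  · have hkl : q * klFun (p / q) = 0 := by
      rw [← mul_log_div_sub_sub_eq_mul_klFun hq, heq, sub_self]
    have := (klFun_eq_zero_iff (div_nonneg hp hq.le)).mp
      ((mul_eq_zero.mp hkl).resolve_left hq.ne')
    exact (div_eq_one_iff_eq hq.ne').mp this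

variable {ι : Type*} [Fintype ι] {p q : ι → ℝ}

lemma klArr_of_absCont (hpq : ∀ i, q i = 0 → p i = 0) :
    klArr p q = ENNReal.ofReal (∑ i, p i * log (p i / q i)) :=
  if_pos hpq

lemma klArr_of_not_absCont (hpq : ¬ ∀ i, q i = 0 → p i = 0) : klArr p q = ⊤ :=
  if_neg hpq

lemma IsProbArray.sum_mul_log_div_eq_sum_sub (hp : IsProbArray p) (hq : IsProbArray q) :
    ∑ i, p i * log (p i / q i) = ∑ i, (p i * log (p i / q i) - (p i - q i)) := by
  rw [Finset.sum_sub_distrib, Finset.sum_sub_distrib, hp.2, hq.2, sub_self, sub_zero]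

theorem IsProbArray.sum_mul_log_div_nonneg (hp : IsProbArray p) (hq : IsProbArray q)
    (hpq : ∀ i, q i = 0 → p i = 0) : 0 ≤ ∑ i, p i * log (p i / q i) := by
  rw [hp.sum_mul_log_div_eq_sum_sub hq]
  exact Finset.sum_nonneg fun i _ ↦ sub_nonneg.mpr (sub_le_mul_log_div (hp.1 i) (hq.1 i) (hpq i))

theorem IsProbArray.eq_of_sum_mul_log_div_eq_zero (hp : IsProbArray p) (hq : IsProbArray q)
    (hpq : ∀ i, q i = 0 → p i = 0) (h0 : ∑ i, p i * log (p i / q i) = 0) : p = q := by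
  rw [hp.sum_mul_log_div_eq_sum_sub hq, Finset.sum_eq_zero_iff_of_nonneg fun i _ ↦
    sub_nonneg.mpr (sub_le_mul_log_div (hp.1 i) (hq.1 i) (hpq i))] at h0
  funext i
  exact eq_of_mul_log_div_eq_sub (hp.1 i) (hq.1 i) (hpq i) (sub_eq_zero.mp (h0 i (by simp)))

end Gibbs

section ExpTilt

noncomputable def expTilt {ι : Type*} [Fintype ι] (q h : ι → ℝ) (lam : ℝ) (i : ι) : ℝ :=
  q i * exp (lam * h i) / ∑ j, q j * exp (lam * h j)

variable {ι : Type*} [Fintype ι] {p q : ι → ℝ} (h : ι → ℝ) (lam : ℝ)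

lemma IsProbArray.sum_mul_exp_pos (hq : IsProbArray q) : 0 < ∑ j, q j * exp (lam * h j) := by
  obtain ⟨i, hi⟩ : ∃ i, 0 < q i := by
    by_contra! hle
    have : ∑ i, q i = 0 := Finset.sum_eq_zero fun i _ ↦ le_antisymm (hle i) (hq.1 i)
    simp [hq.2] at this
  exact Finset.sum_pos' (fun j _ ↦ mul_nonneg (hq.1 j) (exp_pos _).le)
    ⟨i, Finset.mem_univ i, mul_pos hi (exp_pos _)⟩

lemma isProbArray_expTilt (hq : IsProbArray q) : IsProbArray (expTilt q h lam) :=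
  ⟨fun i ↦ div_nonneg (mul_nonneg (hq.1 i) (exp_pos _).le) (hq.sum_mul_exp_pos h lam).le,
    by unfold expTilt; rw [← Finset.sum_div, div_self (hq.sum_mul_exp_pos h lam).ne']⟩

lemma IsProbArray.expTilt_eq_zero_iff (hq : IsProbArray q) {i : ι} :
    expTilt q h lam i = 0 ↔ q i = 0 := by
  simp [expTilt, (exp_pos _).ne', (hq.sum_mul_exp_pos h lam).ne']

lemma sum_expTilt_mul :
    ∑ i, expTilt q h lam i * h i =
      (∑ i, h i * q i * exp (lam * h i)) / ∑ j, q j * exp (lam * h j) := by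
  rw [Finset.sum_div]
  exact Finset.sum_congr rfl fun i _ ↦ by rw [expTilt]; ring

theorem IsProbArray.sum_mul_log_div_eq_add (hp : IsProbArray p) (hq : IsProbArray q)
    (hpq : ∀ i, q i = 0 → p i = 0) :
    ∑ i, p i * log (p i / q i) = ∑ i, p i * log (p i / expTilt q h lam i)
      + (lam * ∑ i, p i * h i - log (∑ j, q j * exp (lam * h j))) := by
  set Z := ∑ j, q j * exp (lam * h j) with hZdef
  have hZ : 0 < Z := hq.sum_mul_exp_pos h lam
  have hterm : ∀ i, p i * log (p i / q i)
      = p i * log (p i / expTilt q h lam i) + (lam * (p i * h i) - p i * log Z) := by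
    intro i
    rcases (hp.1 i).eq_or_lt with hpi | hpi
    · simp [← hpi]
    have hqi : 0 < q i := (hq.1 i).lt_of_ne fun h0 ↦ hpi.ne' (hpq i h0.symm)
    have hqsi : 0 < expTilt q h lam i := by rw [expTilt]; positivity
    have hsplit : p i / q i = p i / expTilt q h lam i * (exp (lam * h i) / Z) := by
      rw [expTilt, ← hZdef]; field_simp
    rw [hsplit, log_mul (by positivity) (by positivity), log_div (exp_pos _).ne' hZ.ne', log_exp]
    ring
  rw [Finset.sum_congr rfl fun i _ ↦ hterm i, Finset.sum_add_distrib, Finset.sum_sub_distrib,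
    ← Finset.mul_sum, ← Finset.sum_mul, hp.2, one_mul]

variable {h lam}

lemma IsProbArray.sum_mul_log_div_eq_add_of_mean_eq (hp : IsProbArray p) (hq : IsProbArray q)
    (hpq : ∀ i, q i = 0 → p i = 0) (hmean : ∑ i, p i * h i = ∑ i, expTilt q h lam i * h i) :
    ∑ i, p i * log (p i / q i) = ∑ i, p i * log (p i / expTilt q h lam i)
      + ∑ i, expTilt q h lam i * log (expTilt q h lam i / q i) := by
  have hqs := isProbArray_expTilt h lam hq
  have hself := hqs.sum_mul_log_div_eq_add h lam hq fun i ↦ (hq.expTilt_eq_zero_iff h lam).mpr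
  rw [hp.sum_mul_log_div_eq_add h lam hq hpq, hself, hmean]
  simp

theorem klArr_expTilt_le (hp : IsProbArray p) (hq : IsProbArray q)
    (hmean : ∑ i, p i * h i = ∑ i, expTilt q h lam i * h i) :
    klArr (expTilt q h lam) q ≤ klArr p q := by
  by_cases hpq : ∀ i, q i = 0 → p i = 0
  · have hpqs : ∀ i, expTilt q h lam i = 0 → p i = 0 :=
      fun i hi ↦ hpq i ((hq.expTilt_eq_zero_iff h lam).mp hi)
    rw [klArr_of_absCont hpq, klArr_of_absCont fun i ↦ (hq.expTilt_eq_zero_iff h lam).mpr,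
      hp.sum_mul_log_div_eq_add_of_mean_eq hq hpq hmean]
    exact ENNReal.ofReal_le_ofReal
      (le_add_of_nonneg_left (hp.sum_mul_log_div_nonneg (isProbArray_expTilt h lam hq) hpqs))
  · rw [klArr_of_not_absCont hpq]
    exact le_top

theorem eq_expTilt_of_klArr_le (hp : IsProbArray p) (hq : IsProbArray q)
    (hmean : ∑ i, p i * h i = ∑ i, expTilt q h lam i * h i)
    (hle : klArr p q ≤ klArr (expTilt q h lam) q) : p = expTilt q h lam := by
  have hqs := isProbArray_expTilt h lam hq
  have hqsq : ∀ i, q i = 0 → expTilt q h lam i = 0 :=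
    fun i ↦ (hq.expTilt_eq_zero_iff h lam).mpr
  rw [klArr_of_absCont hqsq] at hle
  have hpq : ∀ i, q i = 0 → p i = 0 := by
    by_contra hpq
    rw [klArr_of_not_absCont hpq, top_le_iff] at hle
    exact ENNReal.ofReal_ne_top hle
  have hpqs : ∀ i, expTilt q h lam i = 0 → p i = 0 :=
    fun i hi ↦ hpq i ((hq.expTilt_eq_zero_iff h lam).mp hi)
  rw [klArr_of_absCont hpq, ENNReal.ofReal_le_ofReal_iff (hqs.sum_mul_log_div_nonneg hq hqsq),
    hp.sum_mul_log_div_eq_add_of_mean_eq hq hpq hmean] at hle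
  exact hp.eq_of_sum_mul_log_div_eq_zero hqs hpqs
    (le_antisymm (by linarith) (hp.sum_mul_log_div_nonneg hqs hpqs))

end ExpTilt

theorem Iprojection_on_single_linear_constraint_general
    (d n : ℕ)
    (qd : (Fin d → Fin n) → ℝ) (hqd : IsProbArray qd)
    (h : (Fin d → Fin n) → ℝ) (a : ℝ)
    (B : Finset (Fin d → Fin n))
    (hB : B = Finset.univ.filter (fun i => 0 < qd i ∧ h i ≠ 0))
    (Λ : ℝ → ℝ)
    (hΛ : Λ = fun lam =>
      (∑ i ∈ B, h i * qd i * Real.exp (lam * h i)) /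
      (∑ i : Fin d → Fin n, qd i * Real.exp (lam * h i)))
    (lam₀ : ℝ) (hlam₀ : Λ lam₀ = a)
    (E'' : Set ((Fin d → Fin n) → ℝ))
    (hE'' : E'' = {p | IsProbArray p ∧ ∑ i : Fin d → Fin n, p i * h i = a})
    (qs : (Fin d → Fin n) → ℝ)
    (hqs : qs = fun i =>
      qd i * Real.exp (lam₀ * h i) /
        ∑ i' : Fin d → Fin n, qd i' * Real.exp (lam₀ * h i')) :
    qs ∈ E'' ∧
    (∀ p ∈ E'', klArr qs qd ≤ klArr p qd) ∧
    (∀ p ∈ E'', (∀ p' ∈ E'', klArr p qd ≤ klArr p' qd) → p = qs) := by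
  obtain rfl : qs = expTilt qd h lam₀ := hqs
  subst hE''
  have hmean : ∑ i, expTilt qd h lam₀ i * h i = a := by
    rw [← hlam₀, hΛ, hB, sum_expTilt_mul]
    dsimp only
    rw [Finset.sum_filter_of_ne]
    intro i _ hi
    exact ⟨(hqd.1 i).lt_of_ne fun h0 ↦ hi (by simp [← h0]), fun h0 ↦ hi (by simp [h0])⟩
  refine ⟨⟨isProbArray_expTilt h lam₀ hqd, hmean⟩, fun p hp ↦ ?_, fun p hp hmin ↦ ?_⟩
  · exact klArr_expTilt_le hp.1 hqd (hp.2.trans hmean.symm)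
  · exact eq_expTilt_of_klArr_le hp.1 hqd (hp.2.trans hmean.symm)
      (hmin _ ⟨isProbArray_expTilt h lam₀ hqd, hmean⟩)

/-- The `I`-projection of `q†` on the single linear constraint set
`E'' = {p : ∑ i, p i h i = a}` exists, is unique, and is the exponential
tilting of `q†` by `λ₀ = Λ⁻¹(a)`. -/
theorem Iprojection_on_single_linear_constraint
    (d n : ℕ) (hd : 2 ≤ d) (hn : 2 ≤ n)
    (qd : (Fin d → Fin n) → ℝ) (hqd : IsProbArray qd)
    (h : (Fin d → Fin n) → ℝ) (a : ℝ)
    (B : Finset (Fin d → Fin n))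
    (hB : B = Finset.univ.filter (fun i => 0 < qd i ∧ h i ≠ 0))
    (hnc : ∃ i ∈ B, ∃ i' ∈ B, h i ≠ h i')
    (Λ : ℝ → ℝ)
    (hΛ : Λ = fun lam =>
      (∑ i ∈ B, h i * qd i * Real.exp (lam * h i)) /
      (∑ i : Fin d → Fin n, qd i * Real.exp (lam * h i)))
    (lam₀ : ℝ) (hlam₀ : Λ lam₀ = a)
    (E'' : Set ((Fin d → Fin n) → ℝ))
    (hE'' : E'' = {p | IsProbArray p ∧ ∑ i : Fin d → Fin n, p i * h i = a})
    (qs : (Fin d → Fin n) → ℝ)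
    (hqs : qs = fun i =>
      qd i * Real.exp (lam₀ * h i) /
        ∑ i' : Fin d → Fin n, qd i' * Real.exp (lam₀ * h i')) :
    qs ∈ E'' ∧
    (∀ p ∈ E'', klArr qs qd ≤ klArr p qd) ∧
    (∀ p ∈ E'', (∀ p' ∈ E'', klArr p qd ≤ klArr p' qd) → p = qs) :=
  Iprojection_on_single_linear_constraint_general d n qd hqd h a B hB Λ hΛ lam₀ hlam₀ E'' hE'' qs
    hqs
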